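/- arXiv:1203.0990 — 6 statements merged into one kernel-verified Lean document; each statement's English description precedes it below -/
import Mathlib

section
/- Let 0 < p₁ < p₂ and set λ₀ = 1/√(p₁p₂), λ₁ = 2/p₂. For any n ≥ 2 with pₙ₊₁ > pₙ > 0 increasing (pₙ ≥ p₂ for n ≥ 2), if λ ≥ min{λ₀, λ₁} and λ·pₙ₊₁ ≥ 2, then G_{n+1}(λ) < λ·pₙ, where G_{n+1}(λ) = (λpₙ₊₁ - √(λ²pₙ₊₁² - 4))/2. -/
/-!
Write `x = λ pₙ₊₁ ≥ 2`. Since `(x - √(x² - 4))(x + √(x² - 4)) = 4`, the smaller root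
`G = (x - √(x² - 4))/2` of `t² - x t + 1` is at most `2/x`, so it suffices that
`λ pₙ₊₁ · λ pₙ > 2`. If `λ ≥ 2/p₂` both factors are at least `2`. If `λ ≥ 1/√(p₁p₂)`, either
`pₙ₊₁ < 2pₙ`, and then `λ pₙ > x/2 ≥ 1`, or `pₙ₊₁ ≥ 2pₙ`, and then
`λ² pₙ pₙ₊₁ ≥ 2λ² p₂² > 2λ² p₁p₂ ≥ 2`.
-/

lemma sub_sqrt_sq_sub_four_div_two_lt {x y : ℝ} (hx : 2 ≤ x) (hxy : 2 < x * y) :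
    (x - √(x ^ 2 - 4)) / 2 < y := by
  have hs : √(x ^ 2 - 4) ^ 2 = x ^ 2 - 4 := Real.sq_sqrt (by nlinarith)
  have hs0 : 0 ≤ √(x ^ 2 - 4) := Real.sqrt_nonneg _
  have hroot : x * (x - √(x ^ 2 - 4)) ≤ 4 := by nlinarith
  nlinarith

lemma two_lt_mul_of_two_div_le {b c d lam : ℝ} (hb : 0 < b) (hbc : b ≤ c) (hcd : c < d)
    (hlam : 2 / b ≤ lam) : 2 < lam * d * (lam * c) := by
  have hlb : 2 ≤ lam * b := (div_le_iff₀ hb).mp hlam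
  have hlam0 : 0 < lam := lt_of_lt_of_le (by positivity) hlam
  have hlc : 2 ≤ lam * c := hlb.trans (by gcongr)
  have hld : 2 < lam * d := hlc.trans_lt (by gcongr)
  nlinarith

lemma two_lt_mul_of_one_div_sqrt_le {a b c d lam : ℝ} (ha : 0 < a) (hab : a < b) (hbc : b ≤ c)
    (hcd : c < d) (hlam : 1 / √(a * b) ≤ lam) (h2 : 2 ≤ lam * d) :
    2 < lam * d * (lam * c) := by
  have hb : 0 < b := ha.trans hab
  have hc : 0 < c := hb.trans_le hbc
  have hd : 0 < d := hc.trans hcd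
  have hlam0 : 0 < lam := pos_of_mul_pos_left (by linarith) hd.le
  rcases lt_or_ge d (2 * c) with hdc | hdc
  · have hlc : 1 < lam * c := by nlinarith
    nlinarith
  · have hsab : 0 < √(a * b) := Real.sqrt_pos.mpr (by positivity)
    have hlab : 1 ≤ lam ^ 2 * (a * b) := by
      have h1 : 1 ≤ lam * √(a * b) := by rwa [div_le_iff₀ hsab] at hlam
      have h1sq : 1 ≤ (lam * √(a * b)) ^ 2 := one_le_pow₀ h1
      rwa [mul_pow, Real.sq_sqrt (by positivity)] at h1sq
    calc 2 ≤ 2 * (lam ^ 2 * (a * b)) := by linarith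
      _ < 2 * (lam ^ 2 * (b * b)) := by gcongr
      _ ≤ 2 * (lam ^ 2 * (c * c)) := by gcongr
      _ = lam ^ 2 * (c * (2 * c)) := by ring
      _ ≤ lam ^ 2 * (c * d) := by gcongr
      _ = lam * d * (lam * c) := by ring

/-- Let `0 < p₁ < p₂` with `(pₙ)` a strictly increasing positive sequence, and set
`λ₀ = 1/√(p₁p₂)`, `λ₁ = 2/p₂`. For any `n ≥ 2`, if `λ ≥ min{λ₀, λ₁}` and
`λ·pₙ₊₁ ≥ 2`, then `G_{n+1}(λ) < λ·pₙ`, where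
`G_{n+1}(λ) = (λpₙ₊₁ - √(λ²pₙ₊₁² - 4))/2`. -/
theorem stmt3 (p : ℕ → ℝ) (hpos : ∀ n, 1 ≤ n → 0 < p n)
    (hmono : ∀ m n, 1 ≤ m → m < n → p m < p n)
    (n : ℕ) (hn : 2 ≤ n) (lam : ℝ)
    (hlam : min (1 / Real.sqrt (p 1 * p 2)) (2 / p 2) ≤ lam)
    (h2 : 2 ≤ lam * p (n + 1)) :
    (lam * p (n + 1) - Real.sqrt ((lam * p (n + 1)) ^ 2 - 4)) / 2 < lam * p n := by
  have hp1 : 0 < p 1 := hpos 1 le_rfl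
  have hp12 : p 1 < p 2 := hmono 1 2 le_rfl one_lt_two
  have hp2n : p 2 ≤ p n := by
    rcases hn.eq_or_lt with rfl | h
    · exact le_rfl
    · exact (hmono 2 n (by omega) h).le
  have hpn : p n < p (n + 1) := hmono n (n + 1) (by omega) n.lt_succ_self
  apply sub_sqrt_sq_sub_four_div_two_lt h2
  rcases min_le_iff.mp hlam with hlam0 | hlam1
  · exact two_lt_mul_of_one_div_sqrt_le hp1 hp12 hp2n hpn hlam0 h2
  · exact two_lt_mul_of_two_div_le (hp1.trans hp12) hp2n hpn hlam1
end

section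
/- With pₙ = 2(k² + n²a²)^{(2-β)/2}/(a k²) for 0 < β < 2 and integers a, k ≥ 1, any real λ satisfying 1/√(p₁p₂) < λ < 1/√(p₁p₂ - p₁²) obeys kᵝ/C_a ≤ λ ≤ C_a k^{1+β}/(2-β) for some constant C_a ≥ 1 independent of k. -/
/-!
Put `γ = (2 - β)/2 ∈ (0, 1)`. For `n ≤ 2` we have `k² + n²a² ≤ 5a²k²`, so `p₁, p₂ ≤ 10a/kᵝ`,
which bounds `λ > 1/√(p₁p₂)` from below. For the upper bound, `p₁p₂ - p₁² = p₁(p₂ - p₁)` with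
`p₁ ≥ 2/(a kᵝ)`, and concavity of `t ↦ t^γ` (Bernoulli's inequality) gives
`Y^γ - X^γ ≥ γ (Y - X) Y^γ / Y` for the two bases `X ≤ Y`; this factor `γ` produces `2 - β`.
The constant is `C = 10a`.
-/

open Real

theorem mul_sub_mul_rpow_div_le_rpow_sub_rpow {γ x y : ℝ} (hγ0 : 0 ≤ γ) (hγ1 : γ ≤ 1)
    (hx : 0 ≤ x) (hxy : x ≤ y) : γ * (y - x) * y ^ γ / y ≤ y ^ γ - x ^ γ := by
  rcases hxy.eq_or_lt with rfl | hxy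
  · simp
  have hy : 0 < y := hx.trans_lt hxy
  have bernoulli := rpow_one_add_le_one_add_mul_self (s := x / y - 1)
    (by linarith [div_nonneg hx hy.le]) hγ0 hγ1
  rw [add_sub_cancel, div_rpow hx hy.le, div_le_iff₀ (by positivity)] at bernoulli
  have : γ * (y - x) * y ^ γ / y = -(γ * (x / y - 1)) * y ^ γ := by field_simp; ring
  rw [this]
  linarith

noncomputable def pTerm (a β k n : ℝ) : ℝ :=
  2 * (k ^ 2 + n ^ 2 * a ^ 2) ^ ((2 - β) / 2) / (a * k ^ 2)

section pTerm

variable {a β k : ℝ}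

theorem sq_rpow_two_sub_div_two (hk : 0 < k) : (k ^ 2) ^ ((2 - β) / 2) = k ^ 2 / k ^ β := by
  rw [← rpow_two, ← rpow_mul hk.le, ← rpow_sub hk]
  ring_nf

theorem pTerm_le (ha : 1 ≤ a) (hk : 1 ≤ k) (hβ0 : 0 ≤ β) (hβ2 : β ≤ 2) {n : ℝ} (hn : n ^ 2 ≤ 4) :
    pTerm a β k n ≤ 10 * a / k ^ β := by
  have hk0 : 0 < k := by linarith
  have hbase : k ^ 2 + n ^ 2 * a ^ 2 ≤ 5 * a ^ 2 * k ^ 2 := by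
    have h1 : 1 ≤ a ^ 2 := one_le_pow₀ ha
    have h2 : 1 ≤ k ^ 2 := one_le_pow₀ hk
    nlinarith [mul_le_mul_of_nonneg_right hn (sq_nonneg a)]
  have hpow : (k ^ 2 + n ^ 2 * a ^ 2) ^ ((2 - β) / 2) ≤ 5 * a ^ 2 * (k ^ 2 / k ^ β) :=
    calc (k ^ 2 + n ^ 2 * a ^ 2) ^ ((2 - β) / 2)
        ≤ (5 * a ^ 2 * k ^ 2) ^ ((2 - β) / 2) := by gcongr
      _ = (5 * a ^ 2) ^ ((2 - β) / 2) * (k ^ 2) ^ ((2 - β) / 2) :=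
          mul_rpow (by positivity) (by positivity)
      _ ≤ 5 * a ^ 2 * (k ^ 2 / k ^ β) := by
          rw [sq_rpow_two_sub_div_two hk0]
          gcongr
          exact rpow_le_self_of_one_le (by nlinarith) (by linarith)
  unfold pTerm
  rw [div_le_div_iff₀ (by positivity) (by positivity)]
  calc 2 * (k ^ 2 + n ^ 2 * a ^ 2) ^ ((2 - β) / 2) * k ^ β
      ≤ 2 * (5 * a ^ 2 * (k ^ 2 / k ^ β)) * k ^ β := by gcongr
    _ = 10 * a * (a * k ^ 2) := by field_simp; norm_num

theorem two_div_mul_rpow_le_pTerm (ha : 0 < a) (hk : 0 < k) (hβ2 : β ≤ 2) (n : ℝ) :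
    2 / (a * k ^ β) ≤ pTerm a β k n := by
  have hpow : k ^ 2 / k ^ β ≤ (k ^ 2 + n ^ 2 * a ^ 2) ^ ((2 - β) / 2) := by
    rw [← sq_rpow_two_sub_div_two hk]
    gcongr
    linarith [mul_nonneg (sq_nonneg n) (sq_nonneg a)]
  unfold pTerm
  calc 2 / (a * k ^ β) = 2 * (k ^ 2 / k ^ β) / (a * k ^ 2) := by field_simp
    _ ≤ _ := by gcongr

theorem pTerm_two_sub_pTerm_one_ge (ha : 1 ≤ a) (hk : 1 ≤ k) (hβ0 : 0 ≤ β) (hβ2 : β ≤ 2) :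
    3 * (2 - β) / (5 * a * k ^ (2 + β)) ≤ pTerm a β k 2 - pTerm a β k 1 := by
  have hk0 : 0 < k := by linarith
  set γ := (2 - β) / 2 with hγ
  set X := k ^ 2 + 1 ^ 2 * a ^ 2
  set Y := k ^ 2 + 2 ^ 2 * a ^ 2
  have hγ0 : 0 ≤ γ := by linarith
  have hγ1 : γ ≤ 1 := by linarith
  have hXY : Y - X = 3 * a ^ 2 := by ring
  have hY : Y ≤ 5 * a ^ 2 * k ^ 2 := by
    have h1 : 1 ≤ a ^ 2 := one_le_pow₀ ha
    have h2 : 1 ≤ k ^ 2 := one_le_pow₀ hk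
    nlinarith
  have hYγ : k ^ 2 / k ^ β ≤ Y ^ γ := by
    rw [← sq_rpow_two_sub_div_two hk0]
    gcongr
    linarith [sq_nonneg a]
  have hconcave : 3 * γ / (5 * k ^ β) ≤ Y ^ γ - X ^ γ :=
    calc 3 * γ / (5 * k ^ β) = γ * (3 * a ^ 2) * (k ^ 2 / k ^ β) / (5 * a ^ 2 * k ^ 2) := by
          field_simp
      _ ≤ γ * (Y - X) * Y ^ γ / Y := by rw [hXY]; gcongr
      _ ≤ Y ^ γ - X ^ γ :=
          mul_sub_mul_rpow_div_le_rpow_sub_rpow hγ0 hγ1 (by positivity) (by linarith [sq_nonneg a])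
  have hsub : pTerm a β k 2 - pTerm a β k 1 = 2 * (Y ^ γ - X ^ γ) / (a * k ^ 2) := by
    unfold pTerm; ring
  rw [hsub, rpow_add hk0, rpow_two]
  calc 3 * (2 - β) / (5 * a * (k ^ 2 * k ^ β)) = 2 * (3 * γ / (5 * k ^ β)) / (a * k ^ 2) := by
        rw [hγ]; field_simp
    _ ≤ _ := by gcongr

theorem sq_le_pTerm_one_mul_sub_pTerm_one (ha : 1 ≤ a) (hk : 1 ≤ k) (hβ0 : 0 ≤ β)
    (hβ2 : β ≤ 2) :
    ((2 - β) / (10 * a * k ^ (1 + β))) ^ 2 ≤ pTerm a β k 1 * (pTerm a β k 2 - pTerm a β k 1) := by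
  have ha0 : 0 < a := by linarith
  have hk0 : 0 < k := by linarith
  have hp1 := two_div_mul_rpow_le_pTerm ha0 hk0 hβ2 1
  have hdiff := pTerm_two_sub_pTerm_one_ge ha hk hβ0 hβ2
  have hdiff0 : 0 ≤ 3 * (2 - β) / (5 * a * k ^ (2 + β)) := div_nonneg (by linarith) (by positivity)
  calc ((2 - β) / (10 * a * k ^ (1 + β))) ^ 2
      ≤ 2 / (a * k ^ β) * (3 * (2 - β) / (5 * a * k ^ (2 + β))) := by
        rw [rpow_add hk0, rpow_add hk0, rpow_one, rpow_two,
          div_pow, div_mul_div_comm, div_le_div_iff₀ (by positivity) (by positivity)]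
        have : (2 - β) ^ 2 ≤ 120 * (2 - β) := by nlinarith
        have : 0 < (a * k * k ^ β) ^ 2 := by positivity
        nlinarith
    _ ≤ pTerm a β k 1 * (pTerm a β k 2 - pTerm a β k 1) :=
        mul_le_mul hp1 hdiff hdiff0 ((div_pos two_pos (by positivity)).le.trans hp1)

end pTerm

/-- With `pₙ = 2(k² + n²a²)^{(2-β)/2}/(a k²)` for `0 < β < 2` and integers `a, k ≥ 1`,
any real `λ` satisfying `1/√(p₁p₂) < λ < 1/√(p₁p₂ - p₁²)` obeys
`kᵝ/C_a ≤ λ ≤ C_a k^{1+β}/(2-β)` for some constant `C_a ≥ 1` independent of `k`. -/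
theorem stmt5 (a : ℕ) (ha : 1 ≤ a) (β : ℝ) (hβ0 : 0 < β) (hβ2 : β < 2) :
    ∃ C : ℝ, 1 ≤ C ∧ ∀ k : ℕ, 1 ≤ k → ∀ lam : ℝ,
      (let p : ℕ → ℝ := fun n =>
        2 * ((k : ℝ) ^ 2 + (n : ℝ) ^ 2 * (a : ℝ) ^ 2) ^ ((2 - β) / 2) / ((a : ℝ) * (k : ℝ) ^ 2)
       1 / Real.sqrt (p 1 * p 2) < lam ∧ lam < 1 / Real.sqrt (p 1 * p 2 - (p 1) ^ 2)) →
      (k : ℝ) ^ β / C ≤ lam ∧ lam ≤ C * (k : ℝ) ^ (1 + β) / (2 - β) := by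
  have ha' : (1 : ℝ) ≤ a := by exact_mod_cast ha
  refine ⟨10 * a, by linarith, fun k hk lam hlam => ?_⟩
  have hk' : (1 : ℝ) ≤ k := by exact_mod_cast hk
  obtain ⟨hlow, hup⟩ : 1 / √(pTerm a β k 1 * pTerm a β k 2) < lam ∧
      lam < 1 / √(pTerm a β k 1 * pTerm a β k 2 - pTerm a β k 1 ^ 2) := by
    simpa [pTerm] using hlam
  have hpos (n : ℝ) : 0 < pTerm a β k n :=
    (div_pos two_pos (by positivity)).trans_le (two_div_mul_rpow_le_pTerm (by linarith)
      (by linarith) hβ2.le n)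
  constructor
  · have hprod : pTerm a β k 1 * pTerm a β k 2 ≤ (10 * a / k ^ β) ^ 2 := by
      rw [sq]
      exact mul_le_mul (pTerm_le ha' hk' hβ0.le hβ2.le (by norm_num))
        (pTerm_le ha' hk' hβ0.le hβ2.le (by norm_num)) (hpos 2).le (by positivity)
    calc (k : ℝ) ^ β / (10 * a) = 1 / (10 * a / k ^ β) := (one_div_div _ _).symm
      _ ≤ 1 / √(pTerm a β k 1 * pTerm a β k 2) :=
          one_div_le_one_div_of_le (sqrt_pos.2 (mul_pos (hpos 1) (hpos 2)))
            ((sqrt_le_left (by positivity)).2 hprod)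
      _ ≤ lam := hlow.le
  · have hprod := sq_le_pTerm_one_mul_sub_pTerm_one ha' hk' hβ0.le hβ2.le
    rw [mul_sub, ← sq] at hprod
    have hε : 0 < (2 - β) / (10 * a * (k : ℝ) ^ (1 + β)) := div_pos (by linarith) (by positivity)
    calc lam ≤ 1 / √(pTerm a β k 1 * pTerm a β k 2 - pTerm a β k 1 ^ 2) := hup.le
      _ ≤ 1 / ((2 - β) / (10 * a * (k : ℝ) ^ (1 + β))) :=
          one_div_le_one_div_of_le hε ((le_sqrt' hε).2 hprod)
      _ = 10 * a * k ^ (1 + β) / (2 - β) := one_div_div _ _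
end

section
/- Let (pₙ) be strictly increasing positive reals with p₂ ≥ 4p₁, and suppose λ* solves λp₁ = F₂(λ) with 1/√(p₁p₂) < λ* and 1/(λpₙ) < Fₙ(λ*) < 2/(λ*pₙ) for n ≥ 2. Let n₀ ≥ 2 be such that p_{n₀} ≤ 2p₂ < p_{n₀+1}. Then cₙ = pₙFₙ(λ*)···F₂(λ*) satisfies |cₙ| ≤ p₂ for n ≤ n₀ and |cₙ| ≤ p₂·2^{n₀+1-n} for n ≥ n₀+1. -/
/-!
Each step multiplies `cₙ` by `pₙ₊₁ Fₙ₊₁ / pₙ < 2 / (λ* pₙ)`. The hypotheses `λ* > 1/√(p₁p₂)`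
and `p₂ ≥ 4p₁` give `λ* p₂ > 2`, so from `n = 2` on these ratios are at most `1`, while
`c₂ < 2/λ* < p₂`; once `pₙ > 2p₂`, i.e. for `n > n₀`, we even have `λ* pₙ > 4` and the ratios
are at most `1/2`.
-/

open Finset

def coeff (p F : ℕ → ℝ) (n : ℕ) : ℝ := p n * ∏ j ∈ Icc 2 n, F j

lemma two_lt_mul_of_one_div_sqrt_lt {a b l : ℝ} (ha : 0 < a) (hab : 4 * a ≤ b)
    (hl : 1 / √(a * b) < l) : 2 < l * b := by
  have hab0 : 0 < a * b := mul_pos ha (by linarith)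
  have hsqrt : 0 < √(a * b) := Real.sqrt_pos.2 hab0
  have hl1 : 1 < l * √(a * b) := by rwa [div_lt_iff₀ hsqrt] at hl
  have hlb : 0 < l * b := mul_pos (lt_trans (by positivity) hl) (by linarith)
  have hsq : 4 < (l * b) ^ 2 :=
    calc 4 < 4 * (l * √(a * b)) ^ 2 := by nlinarith
      _ = l ^ 2 * (4 * a) * b := by rw [mul_pow, Real.sq_sqrt hab0.le]; ring
      _ ≤ (l * b) ^ 2 := by nlinarith [mul_le_mul_of_nonneg_left hab (sq_nonneg l)]
  nlinarith

lemma le_mul_two_zpow_of_le_half {c : ℕ → ℝ} {N : ℕ} {B : ℝ} (h₀ : c N ≤ B)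
    (hc : ∀ n ≥ N, c (n + 1) ≤ c n / 2) : ∀ n ≥ N, c n ≤ B * 2 ^ ((N : ℤ) - n) := by
  intro n hn
  induction n, hn using Nat.le_induction with
  | base => simpa using h₀
  | succ n hn ih =>
    calc c (n + 1) ≤ c n / 2 := hc n hn
      _ ≤ B * 2 ^ ((N : ℤ) - n) / 2 := by gcongr
      _ = B * 2 ^ ((N : ℤ) - (n + 1 : ℕ)) := by
        rw [Nat.cast_succ, ← sub_sub, zpow_sub_one₀ two_ne_zero]; ring

section

variable {p F : ℕ → ℝ} {lam : ℝ}

lemma coeff_one : coeff p F 1 = p 1 := by simp [coeff]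

lemma coeff_succ {n : ℕ} (hn : 1 ≤ n) :
    coeff p F (n + 1) = p (n + 1) * F (n + 1) * ∏ j ∈ Icc 2 n, F j := by
  rw [coeff, prod_Icc_succ_top (by omega)]; ring

lemma prod_Icc_nonneg (hF0 : ∀ j, 2 ≤ j → 0 < F j) (n : ℕ) : 0 ≤ ∏ j ∈ Icc 2 n, F j :=
  prod_nonneg fun _ hj => (hF0 _ (mem_Icc.1 hj).1).le

lemma coeff_nonneg (hpos : ∀ n, 1 ≤ n → 0 < p n) (hF0 : ∀ j, 2 ≤ j → 0 < F j) {n : ℕ}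
    (hn : 1 ≤ n) : 0 ≤ coeff p F n :=
  mul_nonneg (hpos n hn).le (prod_Icc_nonneg hF0 n)

lemma coeff_succ_le (hlam : 0 < lam) (hpos : ∀ n, 1 ≤ n → 0 < p n)
    (hF0 : ∀ j, 2 ≤ j → 0 < F j) {n : ℕ} (hn : 1 ≤ n)
    (hFn : F (n + 1) < 2 / (lam * p (n + 1))) :
    coeff p F (n + 1) ≤ 2 / (lam * p n) * coeff p F n := by
  have hpn : 0 < p n := hpos n hn
  have hpF : p (n + 1) * F (n + 1) ≤ 2 / lam := by
    rw [lt_div_iff₀ (mul_pos hlam (hpos _ (by omega)))] at hFn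
    rw [le_div_iff₀ hlam]; linarith
  have hprod := prod_Icc_nonneg hF0 n
  calc coeff p F (n + 1) = p (n + 1) * F (n + 1) * ∏ j ∈ Icc 2 n, F j := coeff_succ hn
    _ ≤ 2 / lam * ∏ j ∈ Icc 2 n, F j := by gcongr
    _ = 2 / (lam * p n) * coeff p F n := by rw [coeff]; field_simp

lemma coeff_succ_le_of_le_mul (hlam : 0 < lam) (hpos : ∀ n, 1 ≤ n → 0 < p n)
    (hF0 : ∀ j, 2 ≤ j → 0 < F j) {n : ℕ} (hn : 1 ≤ n)
    (hFn : F (n + 1) < 2 / (lam * p (n + 1))) {k : ℝ} (hk : 0 < k) (hkn : k ≤ lam * p n) :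
    coeff p F (n + 1) ≤ 2 / k * coeff p F n :=
  (coeff_succ_le hlam hpos hF0 hn hFn).trans <| by
    gcongr
    exact coeff_nonneg hpos hF0 hn

lemma coeff_le_of_two_lt (hlam : 0 < lam) (hpos : ∀ n, 1 ≤ n → 0 < p n)
    (hp : MonotoneOn p (Set.Ici 1)) (hF0 : ∀ j, 2 ≤ j → 0 < F j)
    (hF : ∀ n, 2 ≤ n → F n < 2 / (lam * p n)) (hlam2 : 2 < lam * p 2) {n : ℕ} (hn : 1 ≤ n) :
    coeff p F n ≤ p 2 := by
  have hc2 : coeff p F 2 ≤ p 2 := by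
    have h := coeff_succ_le hlam hpos hF0 le_rfl (hF 2 le_rfl)
    rw [coeff_one, div_mul_eq_mul_div, mul_div_mul_right _ _ (hpos 1 le_rfl).ne'] at h
    refine h.trans ?_
    rw [div_le_iff₀ hlam]; linarith
  have hanti : AntitoneOn (coeff p F) (Set.Ici 2) :=
    antitoneOn_nat_Ici_of_succ_le fun m hm => by
      have hpm : lam * p 2 ≤ lam * p m :=
        mul_le_mul_of_nonneg_left (hp (by simp) (Set.mem_Ici.2 (by omega)) hm) hlam.le
      simpa using coeff_succ_le_of_le_mul hlam hpos hF0 (by omega) (hF _ (by omega)) two_pos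
        (hlam2.le.trans hpm)
  rcases hn.eq_or_lt with rfl | hn
  · exact coeff_one.trans_le (hp (by simp) (by simp) one_le_two)
  · exact (hanti (Set.mem_Ici.2 le_rfl) (Set.mem_Ici.2 hn) hn).trans hc2

end

theorem stmt8_general (p : ℕ → ℝ) (hpos : ∀ n, 1 ≤ n → 0 < p n)
    (hmono : ∀ n, 1 ≤ n → p n < p (n + 1))
    (h42 : 4 * p 1 ≤ p 2)
    (lam : ℝ) (F : ℕ → ℝ)
    (hlam : 1 / Real.sqrt (p 1 * p 2) < lam)
    (hF : ∀ n, 2 ≤ n → 1 / (lam * p n) < F n ∧ F n < 2 / (lam * p n))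
    (n₀ : ℕ) (hn₀2 : 2 * p 2 < p (n₀ + 1)) :
    (∀ n, 2 ≤ n → n ≤ n₀ → |p n * ∏ j ∈ Finset.Icc 2 n, F j| ≤ p 2) ∧
    (∀ n, n₀ + 1 ≤ n →
      |p n * ∏ j ∈ Finset.Icc 2 n, F j| ≤ p 2 * (2 : ℝ) ^ ((n₀ : ℤ) + 1 - (n : ℤ))) := by
  have hp1 : 0 < p 1 := hpos 1 le_rfl
  have hlam0 : 0 < lam :=
    lt_trans (one_div_pos.2 (Real.sqrt_pos.2 (mul_pos hp1 (hpos 2 one_le_two)))) hlam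
  have hlam2 : 2 < lam * p 2 := two_lt_mul_of_one_div_sqrt_lt hp1 h42 hlam
  have hp : MonotoneOn p (Set.Ici 1) :=
    monotoneOn_nat_Ici_of_le_succ fun n hn => (hmono n hn).le
  have hF0 (j : ℕ) (hj : 2 ≤ j) : 0 < F j :=
    lt_trans (one_div_pos.2 (mul_pos hlam0 (hpos j (by omega)))) (hF j hj).1
  have habs (n : ℕ) (hn : 1 ≤ n) : |coeff p F n| = coeff p F n :=
    abs_of_nonneg (coeff_nonneg hpos hF0 hn)
  have hbound (n : ℕ) (hn : 1 ≤ n) : coeff p F n ≤ p 2 :=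
    coeff_le_of_two_lt hlam0 hpos hp hF0 (fun n hn => (hF n hn).2) hlam2 hn
  have hhalf (n : ℕ) (hn : n ≥ n₀ + 1) : coeff p F (n + 1) ≤ coeff p F n / 2 := by
    have hp_n : p (n₀ + 1) ≤ p n := hp (by simp) (Set.mem_Ici.2 (by omega)) hn
    have h4 : 4 ≤ lam * p n := by nlinarith
    have h := coeff_succ_le_of_le_mul hlam0 hpos hF0 (by omega) (hF _ (by omega)).2 four_pos h4
    linarith
  refine ⟨fun n hn _ => (habs n (by omega)).trans_le (hbound n (by omega)),
    fun n hn => (habs n (by omega)).trans_le ?_⟩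
  exact_mod_cast le_mul_two_zpow_of_le_half (hbound (n₀ + 1) (by omega)) hhalf n hn

/-- Let `(pₙ)` be strictly increasing positive reals with `p₂ ≥ 4p₁`, and suppose `λ*`
solves `λp₁ = F₂(λ)` with `1/√(p₁p₂) < λ*` and `1/(λ*pₙ) < Fₙ(λ*) < 2/(λ*pₙ)` for
`n ≥ 2`.  Let `n₀ ≥ 2` be such that `p_{n₀} ≤ 2p₂ < p_{n₀+1}`.  Then
`cₙ = pₙ Fₙ(λ*) ⋯ F₂(λ*)` satisfies `|cₙ| ≤ p₂` for `2 ≤ n ≤ n₀` and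
`|cₙ| ≤ p₂ · 2^{n₀+1-n}` for `n ≥ n₀+1`. -/
theorem stmt8 (p : ℕ → ℝ) (hpos : ∀ n, 1 ≤ n → 0 < p n)
    (hmono : ∀ n, 1 ≤ n → p n < p (n + 1))
    (h42 : 4 * p 1 ≤ p 2)
    (lam : ℝ) (F : ℕ → ℝ)
    (hsol : lam * p 1 = F 2)
    (hlam : 1 / Real.sqrt (p 1 * p 2) < lam)
    (hF : ∀ n, 2 ≤ n → 1 / (lam * p n) < F n ∧ F n < 2 / (lam * p n))
    (n₀ : ℕ) (hn₀ : 2 ≤ n₀) (hn₀1 : p n₀ ≤ 2 * p 2) (hn₀2 : 2 * p 2 < p (n₀ + 1)) :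
    (∀ n, 2 ≤ n → n ≤ n₀ → |p n * ∏ j ∈ Finset.Icc 2 n, F j| ≤ p 2) ∧
    (∀ n, n₀ + 1 ≤ n →
      |p n * ∏ j ∈ Finset.Icc 2 n, F j| ≤ p 2 * (2 : ℝ) ^ ((n₀ : ℤ) + 1 - (n : ℤ))) :=
  stmt8_general p hpos hmono h42 lam F hlam hF n₀ hn₀2
end

section
/- Let s ≥ 0, and let (cₙ)_{n≥1} be a real sequence with |cₙ| ≤ M for n ≤ N and |cₙ| ≤ M·2^{N+1-n} for n > N, where M = |c_{n₁}|·K for some index n₁ and constant K ≥ 1. Then ‖nˢcₙ‖_{ℓ²} ≤ C(Nˢ + K)‖cₙ‖_{ℓ²} for a universal constant C. -/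
/-!
Split the sum at `n = 2N`. For `n ≤ 2N` the weight is at most `(2N)^{2s}`, which gives
`(2N)^{2s}‖c‖²`. For `n > 2N` the tail hypothesis gives `cₙ² ≤ 4 M² 2^{-n}`, so this part is at
most `4 M² Σ n^{2s} 2^{-n}`, a constant depending only on `s` times `M² ≤ K² ‖c‖²`.
-/

open Real

lemma summable_rpow_mul_geometric (p : ℝ) {r : ℝ} (hr₀ : 0 ≤ r) (hr₁ : r < 1) :
    Summable fun n : ℕ => (n : ℝ) ^ p * r ^ n := by
  have hpow : ∀ n : ℕ, (n : ℝ) ^ p ≤ (n : ℝ) ^ ⌈p⌉₊ + 1 := by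
    intro n
    rcases n.eq_zero_or_pos with rfl | hn
    · rw [Nat.cast_zero]
      exact (zero_rpow_le_one p).trans (le_add_of_nonneg_left (by positivity))
    · calc (n : ℝ) ^ p ≤ (n : ℝ) ^ (⌈p⌉₊ : ℝ) :=
            rpow_le_rpow_of_exponent_le (by exact_mod_cast hn) (Nat.le_ceil p)
        _ ≤ (n : ℝ) ^ ⌈p⌉₊ + 1 := by rw [rpow_natCast]; linarith
  refine Summable.of_nonneg_of_le (fun n => by positivity)
    (fun n => mul_le_mul_of_nonneg_right (hpow n) (pow_nonneg hr₀ n)) ?_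
  simp_rw [add_mul, one_mul]
  exact (summable_pow_mul_geometric_of_norm_lt_one _ (by rwa [norm_of_nonneg hr₀])).add
    (summable_geometric_of_lt_one hr₀ hr₁)

lemma sq_le_of_abs_le_mul_two_zpow {x M : ℝ} {N n : ℕ} (hn : 2 * N < n)
    (hx : |x| ≤ M * (2 : ℝ) ^ ((N : ℤ) + 1 - (n : ℤ))) :
    x ^ 2 ≤ 4 * M ^ 2 * (1 / 2) ^ n := by
  have hzpow : ((2 : ℝ) ^ ((N : ℤ) + 1 - (n : ℤ))) ^ 2 ≤ 4 * (1 / 2) ^ n := by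
    rw [← zpow_natCast, ← zpow_mul, one_div, inv_pow, ← zpow_natCast, ← zpow_neg,
      show (4 : ℝ) = 2 ^ (2 : ℤ) by norm_num, ← zpow_add₀ two_ne_zero]
    exact zpow_le_zpow_right₀ one_le_two (by omega)
  calc x ^ 2 = |x| ^ 2 := (sq_abs x).symm
    _ ≤ (M * (2 : ℝ) ^ ((N : ℤ) + 1 - (n : ℤ))) ^ 2 := pow_le_pow_left₀ (abs_nonneg x) hx 2
    _ = M ^ 2 * ((2 : ℝ) ^ ((N : ℤ) + 1 - (n : ℤ))) ^ 2 := mul_pow _ _ 2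
    _ ≤ M ^ 2 * (4 * (1 / 2) ^ n) := mul_le_mul_of_nonneg_left hzpow (sq_nonneg M)
    _ = 4 * M ^ 2 * (1 / 2) ^ n := by ring

section WeightedSum

variable {s M : ℝ} {c : ℕ → ℝ} {N : ℕ}

lemma sq_rpow_mul_le (hs : 0 ≤ s)
    (htail : ∀ n, N < n → |c n| ≤ M * (2 : ℝ) ^ ((N : ℤ) + 1 - (n : ℤ))) (n : ℕ) :
    ((n : ℝ) ^ s * c n) ^ 2 ≤
      ((2 * N : ℝ) ^ s) ^ 2 * c n ^ 2 + 4 * M ^ 2 * ((n : ℝ) ^ (2 * s) * (1 / 2) ^ n) := by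
  rw [mul_pow]
  rcases le_or_gt n (2 * N) with hn | hn
  · have hweight : ((n : ℝ) ^ s) ^ 2 ≤ ((2 * N : ℝ) ^ s) ^ 2 :=
      pow_le_pow_left₀ (by positivity) (rpow_le_rpow (by positivity) (by exact_mod_cast hn) hs) 2
    have htail_nonneg : 0 ≤ 4 * M ^ 2 * ((n : ℝ) ^ (2 * s) * (1 / 2) ^ n) := by positivity
    nlinarith [sq_nonneg (c n)]
  · have hsq : ((n : ℝ) ^ s) ^ 2 = (n : ℝ) ^ (2 * s) := by
      rw [← rpow_mul_natCast (Nat.cast_nonneg n), mul_comm]; norm_num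
    have hc := sq_le_of_abs_le_mul_two_zpow hn (htail n (by omega))
    have hplateau_nonneg : 0 ≤ ((2 * N : ℝ) ^ s) ^ 2 * c n ^ 2 := by positivity
    rw [hsq]
    nlinarith [rpow_nonneg (Nat.cast_nonneg n) (2 * s)]

lemma tsum_sq_rpow_mul_le (hs : 0 ≤ s) (hc : Summable fun n => c n ^ 2)
    (hsc : Summable fun n : ℕ => ((n : ℝ) ^ s * c n) ^ 2)
    (htail : ∀ n, N < n → |c n| ≤ M * (2 : ℝ) ^ ((N : ℤ) + 1 - (n : ℤ))) :
    ∑' n : ℕ, ((n : ℝ) ^ s * c n) ^ 2 ≤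
      ((2 * N : ℝ) ^ s) ^ 2 * ∑' n, c n ^ 2 +
        4 * M ^ 2 * ∑' n : ℕ, (n : ℝ) ^ (2 * s) * (1 / 2) ^ n := by
  have hgeom := summable_rpow_mul_geometric (2 * s) (by norm_num : (0 : ℝ) ≤ 1 / 2) (by norm_num)
  calc ∑' n : ℕ, ((n : ℝ) ^ s * c n) ^ 2
      ≤ ∑' n : ℕ, (((2 * N : ℝ) ^ s) ^ 2 * c n ^ 2 +
          4 * M ^ 2 * ((n : ℝ) ^ (2 * s) * (1 / 2) ^ n)) :=
        hsc.tsum_le_tsum (sq_rpow_mul_le hs htail) ((hc.mul_left _).add (hgeom.mul_left _))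
    _ = _ := by rw [(hc.mul_left _).tsum_add (hgeom.mul_left _), tsum_mul_left, tsum_mul_left]

end WeightedSum

lemma sqrt_le_add_mul_sqrt {T S a b : ℝ} (ha : 0 ≤ a) (hb : 0 ≤ b) (hS : 0 ≤ S)
    (h : T ≤ a ^ 2 * S + b ^ 2 * S) : √T ≤ (a + b) * √S :=
  calc √T ≤ √((a + b) ^ 2 * S) := sqrt_le_sqrt (h.trans (by nlinarith [mul_nonneg ha hb]))
    _ = (a + b) * √S := by rw [sqrt_mul (sq_nonneg _), sqrt_sq (add_nonneg ha hb)]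

/-- Let `s ≥ 0`, and let `(cₙ)_{n≥1}` be a real sequence with `|cₙ| ≤ M` for `n ≤ N`
and `|cₙ| ≤ M·2^{N+1-n}` for `n > N`, where `M = |c_{n₁}|·K` for some index `n₁` and a
constant `K ≥ 1`.  Then `‖nˢcₙ‖_{ℓ²} ≤ C(Nˢ + K)‖cₙ‖_{ℓ²}` for a constant `C`
depending only on `s`. -/
theorem stmt9 (s : ℝ) (hs : 0 ≤ s) :
    ∃ C > (0 : ℝ), ∀ (c : ℕ → ℝ) (N n₁ : ℕ) (M K : ℝ),
      1 ≤ K → 1 ≤ N → 1 ≤ n₁ → c 0 = 0 →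
      M = |c n₁| * K →
      (∀ n, 1 ≤ n → n ≤ N → |c n| ≤ M) →
      (∀ n, N < n → |c n| ≤ M * (2 : ℝ) ^ ((N : ℤ) + 1 - (n : ℤ))) →
      Summable (fun n : ℕ => (c n) ^ 2) →
      Summable (fun n : ℕ => ((n : ℝ) ^ s * c n) ^ 2) →
      Real.sqrt (∑' n : ℕ, ((n : ℝ) ^ s * c n) ^ 2) ≤
        C * ((N : ℝ) ^ s + K) * Real.sqrt (∑' n : ℕ, (c n) ^ 2) := by
  set A := ∑' n : ℕ, (n : ℝ) ^ (2 * s) * (1 / 2) ^ n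
  have hA : 0 ≤ A := tsum_nonneg fun n => by positivity
  refine ⟨2 ^ s + 2 * √A, by positivity, ?_⟩
  intro c N n₁ M K hK _ _ _ hM _ htail hc hsc
  set S := ∑' n, c n ^ 2
  have hS : 0 ≤ S := tsum_nonneg fun n => sq_nonneg _
  have hM2 : M ^ 2 ≤ K ^ 2 * S := by
    rw [hM, mul_pow, sq_abs, mul_comm]
    exact mul_le_mul_of_nonneg_left (hc.le_tsum n₁ fun j _ => sq_nonneg _) (sq_nonneg K)
  have hsum := tsum_sq_rpow_mul_le hs hc hsc htail
  rw [mul_rpow zero_le_two (Nat.cast_nonneg N)] at hsum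
  have hNs : 0 ≤ (N : ℝ) ^ s := by positivity
  have hsqrt := sqrt_le_add_mul_sqrt (a := 2 ^ s * (N : ℝ) ^ s) (b := 2 * √A * K)
    (by positivity) (by positivity) hS (by nlinarith [sq_sqrt hA])
  refine hsqrt.trans (mul_le_mul_of_nonneg_right ?_ (sqrt_nonneg S))
  nlinarith [rpow_pos_of_pos two_pos s, sqrt_nonneg A]
end

section
/- If ρ(x₁,x₂) = sin(kx₁) Σ_{n≥1} cₙ sin(nax₂) with rapidly decaying cₙ solves -a cos(ax₂)·R₁²Λ^βρ = λρ on 𝕋², then the coefficients satisfy the recursion λc₁ + c₂/p₂ = 0 and λcₙ + cₙ₊₁/pₙ₊₁ + cₙ₋₁/pₙ₋₁ = 0 for n ≥ 2, where pₙ = 2(k² + n²a²)^{1-β/2}/(ak²). -/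
/-!
Evaluating at `x₁ = π / (2k)`, `x₂ = y / a` turns the eigenvalue equation into the identity
`-a cos y · Σ mₙcₙ sin(ny) = λ Σ cₙ sin(ny)` of one-variable sine series with absolutely
summable coefficients. Multiplying by `sin(Ny)` and integrating termwise over `[0, 2π]`,
orthogonality extracts `π c_N` on the right, while `cos y sin(Ny) = (sin((N+1)y) + sin((N-1)y)) / 2`
extracts `π/2 (m_{N+1}c_{N+1} + m_{N-1}c_{N-1})` on the left. Finally `1 / pₙ = a mₙ / 2`.
-/

open Real intervalIntegral
open MeasureTheory (volume)

lemma integral_cos_int_mul (j : ℤ) :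
    ∫ y in (0 : ℝ)..2 * π, cos (j * y) = if j = 0 then 2 * π else 0 := by
  rcases eq_or_ne j 0 with rfl | hj
  · simp
  · rw [integral_comp_mul_left (fun y => cos y) (Int.cast_ne_zero.2 hj), integral_cos, if_neg hj,
      show (j : ℝ) * (2 * π) = (2 * j : ℤ) * π by push_cast; ring, sin_int_mul_pi]
    simp

lemma integral_sin_nat_mul_mul_sin_nat_mul (n N : ℕ) :
    ∫ y in (0 : ℝ)..2 * π, sin (n * y) * sin (N * y)
      = if n = N ∧ n ≠ 0 then π else 0 := by
  have hprod : ∀ y : ℝ, sin (n * y) * sin (N * y)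
      = (cos (((n - N : ℤ) : ℝ) * y) - cos (((n + N : ℤ) : ℝ) * y)) / 2 := fun y => by
    push_cast
    rw [sub_mul, add_mul]
    linear_combination two_mul_sin_mul_sin (n * y) (N * y) / 2
  have hint : ∀ j : ℤ, IntervalIntegrable (fun y : ℝ => cos (j * y)) volume 0 (2 * π) :=
    fun j => (by fun_prop : Continuous fun y : ℝ => cos (j * y)).intervalIntegrable _ _
  simp only [hprod, integral_div, integral_sub (hint _) (hint _), integral_cos_int_mul]
  split_ifs <;> first | ring1 | (exfalso; omega)

noncomputable def sineSeries (b : ℕ → ℝ) (y : ℝ) : ℝ := ∑' n : ℕ, b n * sin (n * y)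

section sineSeries

variable {b : ℕ → ℝ}

lemma abs_mul_sin_le (r y : ℝ) : |r * sin y| ≤ |r| := by
  rw [abs_mul]
  exact mul_le_of_le_one_right (abs_nonneg r) (abs_sin_le_one y)

lemma hasSum_sineSeries (hb : Summable fun n => |b n|) (y : ℝ) :
    HasSum (fun n => b n * sin (n * y)) (sineSeries b y) :=
  (Summable.of_norm_bounded hb fun n => abs_mul_sin_le (b n) (n * y)).hasSum

lemma continuous_sineSeries (hb : Summable fun n => |b n|) : Continuous (sineSeries b) :=
  continuous_tsum (fun _ => continuous_const.mul (continuous_sin.comp (continuous_const_mul _))) hb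
    fun n y => abs_mul_sin_le (b n) (n * y)

lemma intervalIntegrable_sineSeries_mul (hb : Summable fun n => |b n|) {f : ℝ → ℝ}
    (hf : Continuous f) (u v : ℝ) :
    IntervalIntegrable (fun y => sineSeries b y * f y) volume u v :=
  ((continuous_sineSeries hb).mul hf).intervalIntegrable u v

lemma integral_sineSeries_mul_sin (hb : Summable fun n => |b n|) (hb0 : b 0 = 0) (N : ℕ) :
    ∫ y in (0 : ℝ)..2 * π, sineSeries b y * sin (N * y) = π * b N := by
  have hsum : HasSum (fun n => ∫ y in (0 : ℝ)..2 * π, b n * sin (n * y) * sin (N * y))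
      (∫ y in (0 : ℝ)..2 * π, sineSeries b y * sin (N * y)) := by
    refine hasSum_integral_of_dominated_convergence (fun n _ => |b n|)
      (fun _ => Continuous.aestronglyMeasurable (by fun_prop))
      (fun _ => .of_forall fun _ _ => (abs_mul_sin_le _ _).trans (abs_mul_sin_le _ _))
      (.of_forall fun _ _ => hb) intervalIntegrable_const
      (.of_forall fun y _ => (hasSum_sineSeries hb y).mul_right _)
  have hterm : ∀ n, ∫ y in (0 : ℝ)..2 * π, b n * sin (n * y) * sin (N * y)
      = if n = N then π * b N else 0 := fun n => by
    simp only [mul_assoc, integral_const_mul, integral_sin_nat_mul_mul_sin_nat_mul]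
    split_ifs <;> grind
  simp only [hterm] at hsum
  exact hsum.unique (hasSum_ite_eq N _)

lemma integral_sineSeries_mul_cos_mul_sin (hb : Summable fun n => |b n|) (hb0 : b 0 = 0) {N : ℕ}
    (hN : 1 ≤ N) :
    ∫ y in (0 : ℝ)..2 * π, sineSeries b y * (cos y * sin (N * y))
      = π / 2 * (b (N + 1) + b (N - 1)) := by
  have hprod : ∀ y, sineSeries b y * (cos y * sin (N * y))
      = (sineSeries b y * sin ((N + 1 : ℕ) * y) + sineSeries b y * sin ((N - 1 : ℕ) * y)) / 2 :=
    fun y => by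
      rw [Nat.cast_sub hN, Nat.cast_add, Nat.cast_one, add_mul, sub_mul, one_mul]
      linear_combination sineSeries b y * two_mul_sin_mul_cos (N * y) y / 2
  have hint : ∀ j : ℕ, IntervalIntegrable (fun y => sineSeries b y * sin (j * y))
      volume 0 (2 * π) := fun j =>
    intervalIntegrable_sineSeries_mul hb (by fun_prop) _ _
  simp only [hprod, integral_div, integral_add (hint _) (hint _),
    integral_sineSeries_mul_sin hb hb0]
  ring

end sineSeries

lemma sineSeries_coeff_recurrence {b c : ℕ → ℝ} {α lam : ℝ} (hb : Summable fun n => |b n|)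
    (hc : Summable fun n => |c n|) (hb0 : b 0 = 0) (hc0 : c 0 = 0)
    (h : ∀ y, -α * cos y * sineSeries b y = lam * sineSeries c y) {N : ℕ} (hN : 1 ≤ N) :
    lam * c N + α / 2 * (b (N + 1) + b (N - 1)) = 0 := by
  have hπ : π * (lam * c N + α / 2 * (b (N + 1) + b (N - 1))) = 0 :=
    calc π * (lam * c N + α / 2 * (b (N + 1) + b (N - 1)))
        = lam * (∫ y in (0 : ℝ)..2 * π, sineSeries c y * sin (N * y))
          + α * ∫ y in (0 : ℝ)..2 * π, sineSeries b y * (cos y * sin (N * y)) := by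
          rw [integral_sineSeries_mul_sin hc hc0, integral_sineSeries_mul_cos_mul_sin hb hb0 hN]
          ring
      _ = ∫ y in (0 : ℝ)..2 * π,
            (lam * sineSeries c y - -α * cos y * sineSeries b y) * sin (N * y) := by
          rw [← integral_const_mul, ← integral_const_mul, ← integral_add
            ((intervalIntegrable_sineSeries_mul hc (by fun_prop) _ _).const_mul _)
            ((intervalIntegrable_sineSeries_mul hb (by fun_prop) _ _).const_mul _)]
          congr 1; ext y; ring
      _ = 0 := by simp only [h, sub_self, zero_mul, integral_zero]
  exact (mul_eq_zero.1 hπ).resolve_left pi_ne_zero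

lemma summable_abs_of_abs_mul_sq_le {c : ℕ → ℝ} {C : ℝ}
    (h : ∀ n : ℕ, |c n| * (n : ℝ) ^ 2 ≤ C) :
    Summable fun n => |c n| := by
  refine .of_norm_bounded_eventually_nat ((summable_one_div_nat_pow.2 one_lt_two).mul_left C) ?_
  filter_upwards [Filter.eventually_ge_atTop 1] with n hn
  rw [norm_abs_eq_norm, Real.norm_eq_abs, mul_one_div, le_div_iff₀ (by positivity)]
  exact h n

theorem stmt11_general (a k : ℕ) (ha : 1 ≤ a) (hk : 1 ≤ k) (β : ℝ) (hβ2 : β < 2)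
    (lam : ℝ) (c : ℕ → ℝ) (hc0 : c 0 = 0)
    (hdecay : ∀ j : ℕ, ∃ C : ℝ, ∀ n : ℕ, |c n| * (n : ℝ) ^ j ≤ C)
    (m : ℕ → ℝ)
    (hm : m = fun n : ℕ => (k : ℝ) ^ 2 * ((k : ℝ) ^ 2 + (n : ℝ) ^ 2 * (a : ℝ) ^ 2) ^ ((β - 2) / 2))
    (p : ℕ → ℝ)
    (hp : p = fun n : ℕ =>
      2 * ((k : ℝ) ^ 2 + (n : ℝ) ^ 2 * (a : ℝ) ^ 2) ^ (1 - β / 2) / ((a : ℝ) * (k : ℝ) ^ 2))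
    (heq : ∀ x₁ x₂ : ℝ,
      -(a : ℝ) * Real.cos ((a : ℝ) * x₂) *
          ∑' n : ℕ, m n * c n * Real.sin ((k : ℝ) * x₁) * Real.sin ((n : ℝ) * (a : ℝ) * x₂)
        = lam * ∑' n : ℕ, c n * Real.sin ((k : ℝ) * x₁) * Real.sin ((n : ℝ) * (a : ℝ) * x₂)) :
    lam * c 1 + c 2 / p 2 = 0 ∧
    ∀ n : ℕ, 2 ≤ n → lam * c n + c (n + 1) / p (n + 1) + c (n - 1) / p (n - 1) = 0 := by
  have ha0 : (a : ℝ) ≠ 0 := by positivity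
  have hX : ∀ n : ℕ, 1 ≤ (k : ℝ) ^ 2 + (n : ℝ) ^ 2 * (a : ℝ) ^ 2 := fun n => by
    nlinarith [(one_le_pow₀ (Nat.one_le_cast.2 hk) : (1 : ℝ) ≤ (k : ℝ) ^ 2)]
  have hm_le : ∀ n, |m n| ≤ (k : ℝ) ^ 2 := fun n => by
    rw [hm, abs_of_nonneg (by positivity)]
    exact mul_le_of_le_one_right (by positivity)
      (rpow_le_one_of_one_le_of_nonpos (hX n) (by linarith))
  obtain ⟨C, hC⟩ := hdecay 2
  have hc := summable_abs_of_abs_mul_sq_le hC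
  have hmc : Summable fun n => |m n * c n| :=
    (hc.mul_left _).of_nonneg_of_le (fun _ => abs_nonneg _) fun n => by
      rw [abs_mul]; exact mul_le_mul_of_nonneg_right (hm_le n) (abs_nonneg _)
  have hred :
      ∀ y, -(a : ℝ) * cos y * sineSeries (fun n => m n * c n) y = lam * sineSeries c y := by
    intro y
    have hsin : sin (k * (π / (2 * k))) = 1 := by
      rw [show (k : ℝ) * (π / (2 * k)) = π / 2 by field_simp, sin_pi_div_two]
    have harg : ∀ n : ℕ, (n : ℝ) * a * (y / a) = n * y := fun n => by field_simp
    simpa [sineSeries, hsin, harg, mul_div_cancel₀ _ ha0] using heq (π / (2 * k)) (y / a)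
  have hrec := fun N (hN : 1 ≤ N) =>
    sineSeries_coeff_recurrence hmc hc (by simp [hc0]) hc0 hred hN
  have hcp : ∀ j, c j / p j = a / 2 * (m j * c j) := fun j => by
    simp only [hm, hp]
    rw [show (β - 2) / 2 = -(1 - β / 2) by ring, rpow_neg (by positivity)]
    field_simp
  refine ⟨by simpa [hcp, hc0] using hrec 1 le_rfl, fun n hn => ?_⟩
  rw [hcp, hcp]
  linear_combination hrec n (by omega)

/-- If `ρ(x₁,x₂) = sin(kx₁) Σ_{n≥1} cₙ sin(nax₂)`, with rapidly decaying `cₙ`, solves the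
eigenvalue problem `-a cos(ax₂)·R₁²Λ^βρ = λρ` on `𝕋²` (where `R₁²Λ^β` acts on the mode
`(k, na)` by multiplication with `m(n) = k²(k² + n²a²)^{(β-2)/2}`), then the coefficients
satisfy the recursion `λc₁ + c₂/p₂ = 0` and `λcₙ + cₙ₊₁/pₙ₊₁ + cₙ₋₁/pₙ₋₁ = 0` for `n ≥ 2`,
where `pₙ = 2(k² + n²a²)^{1-β/2}/(ak²)`. -/
theorem stmt11 (a k : ℕ) (ha : 1 ≤ a) (hk : 1 ≤ k) (β : ℝ) (hβ0 : 0 < β) (hβ2 : β < 2)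
    (lam : ℝ) (c : ℕ → ℝ) (hc0 : c 0 = 0)
    (hdecay : ∀ j : ℕ, ∃ C : ℝ, ∀ n : ℕ, |c n| * (n : ℝ) ^ j ≤ C)
    (m : ℕ → ℝ)
    (hm : m = fun n : ℕ => (k : ℝ) ^ 2 * ((k : ℝ) ^ 2 + (n : ℝ) ^ 2 * (a : ℝ) ^ 2) ^ ((β - 2) / 2))
    (p : ℕ → ℝ)
    (hp : p = fun n : ℕ =>
      2 * ((k : ℝ) ^ 2 + (n : ℝ) ^ 2 * (a : ℝ) ^ 2) ^ (1 - β / 2) / ((a : ℝ) * (k : ℝ) ^ 2))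
    (heq : ∀ x₁ x₂ : ℝ,
      -(a : ℝ) * Real.cos ((a : ℝ) * x₂) *
          ∑' n : ℕ, m n * c n * Real.sin ((k : ℝ) * x₁) * Real.sin ((n : ℝ) * (a : ℝ) * x₂)
        = lam * ∑' n : ℕ, c n * Real.sin ((k : ℝ) * x₁) * Real.sin ((n : ℝ) * (a : ℝ) * x₂)) :
    lam * c 1 + c 2 / p 2 = 0 ∧
    ∀ n : ℕ, 2 ≤ n → lam * c n + c (n + 1) / p (n + 1) + c (n - 1) / p (n - 1) = 0 :=
  stmt11_general a k ha hk β hβ2 lam c hc0 hdecay m hm p hp heq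
end

section
/- Let ρ ∈ L^∞(0,T;L²(𝕋²)) solve ∂ₜρ = -a cos(ax₂) R₁²Λ^βρ with 0 < β ≤ 2 and ρ(·,0) = 0. Then ρ(·,t) = 0 for all t ∈ (0,T). -/
/-!
Fix the frequency `k₁`. The modes `ρ̂(k₁, ·)` satisfy a linear system in which the derivative of
each mode is bounded by `M = |a| k₁²` times the supremum of the others, because the multiplier is
at most `k₁²` when `β ≤ 2`. Starting from the uniform bound `√B` and integrating from the zero
initial datum, induction gives `|ρ̂(k₁, k₂, t)| ≤ √B (M t)ⁿ / n!` for every `n`, so the mode vanishes.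
-/

open Set Filter Topology MeasureTheory Nat

theorem eq_zero_of_forall_norm_le_pow_div_factorial {E : Type*} [NormedAddCommGroup E] {x : E}
    {C r : ℝ} (h : ∀ n : ℕ, ‖x‖ ≤ C * r ^ n / n !) : x = 0 := by
  have hlim : Tendsto (fun n : ℕ => C * r ^ n / n !) atTop (𝓝 0) := by
    simpa [mul_div_assoc] using (FloorSemiring.tendsto_pow_div_factorial_atTop r).const_mul C
  exact norm_le_zero_iff.mp (ge_of_tendsto' hlim h)

section PicardIteration

variable {E : Type*} [NormedAddCommGroup E] [NormedSpace ℝ E] [CompleteSpace E]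

theorem norm_le_pow_succ_div_factorial_of_hasDerivAt {f f' : ℝ → E} {t K : ℝ} {n : ℕ}
    (ht : 0 ≤ t) (hf : ContinuousOn f (Icc 0 t)) (hf0 : f 0 = 0)
    (hderiv : ∀ s ∈ Ioo 0 t, HasDerivAt f (f' s) s) (hf' : ContinuousOn f' (Icc 0 t))
    (hbound : ∀ s ∈ Icc 0 t, ‖f' s‖ ≤ K * s ^ n / n !) :
    ‖f t‖ ≤ K * t ^ (n + 1) / (n + 1)! := by
  have hftc := intervalIntegral.integral_eq_sub_of_hasDerivAt_of_le ht hf hderiv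
    (hf'.intervalIntegrable_of_Icc ht)
  rw [hf0, sub_zero] at hftc
  calc ‖f t‖ = ‖∫ s in (0 : ℝ)..t, f' s‖ := by rw [hftc]
    _ ≤ ∫ s in (0 : ℝ)..t, K * s ^ n / n ! :=
      intervalIntegral.norm_integral_le_of_norm_le ht
        (ae_of_all _ fun s hs => hbound s (Ioc_subset_Icc_self hs))
        ((by fun_prop : Continuous fun s : ℝ => K * s ^ n / n !).intervalIntegrable _ _)
    _ = K * t ^ (n + 1) / (n + 1)! := by
      rw [intervalIntegral.integral_div, intervalIntegral.integral_const_mul, integral_pow,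
        factorial_succ]
      push_cast
      field_simp
      ring

variable {ι : Type*} {u F : ℝ → ι → E} {T C M : ℝ}

theorem norm_le_pow_div_factorial_of_hasDerivAt_of_norm_le
    (hu : ∀ i, ContinuousOn (u · i) (Icc 0 T)) (hu0 : ∀ i, u 0 i = 0)
    (hderiv : ∀ s ∈ Ioo 0 T, ∀ i, HasDerivAt (u · i) (F s i) s)
    (hF : ∀ i, ContinuousOn (F · i) (Icc 0 T))
    (hFle : ∀ s ∈ Icc 0 T, ∀ c, (∀ j, ‖u s j‖ ≤ c) → ∀ i, ‖F s i‖ ≤ M * c)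
    (hC : ∀ s ∈ Icc 0 T, ∀ i, ‖u s i‖ ≤ C) (n : ℕ) :
    ∀ t ∈ Icc 0 T, ∀ i, ‖u t i‖ ≤ C * (M * t) ^ n / n ! := by
  induction n with
  | zero => simpa using hC
  | succ n ih =>
    intro t ht i
    have hsub : Icc 0 t ⊆ Icc 0 T := Icc_subset_Icc_right ht.2
    have hbound : ∀ s ∈ Icc 0 t, ‖F s i‖ ≤ C * M ^ (n + 1) * s ^ n / n ! := by
      intro s hs
      calc ‖F s i‖ ≤ M * (C * (M * s) ^ n / n !) := hFle s (hsub hs) _ (ih s (hsub hs)) i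
        _ = C * M ^ (n + 1) * s ^ n / n ! := by ring
    calc ‖u t i‖ ≤ C * M ^ (n + 1) * t ^ (n + 1) / (n + 1)! :=
          norm_le_pow_succ_div_factorial_of_hasDerivAt ht.1 ((hu i).mono hsub) (hu0 i)
            (fun s hs => hderiv s ⟨hs.1, hs.2.trans_le ht.2⟩ i) ((hF i).mono hsub) hbound
      _ = C * (M * t) ^ (n + 1) / (n + 1)! := by ring

theorem eq_zero_of_hasDerivAt_of_norm_le
    (hu : ∀ i, ContinuousOn (u · i) (Icc 0 T)) (hu0 : ∀ i, u 0 i = 0)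
    (hderiv : ∀ s ∈ Ioo 0 T, ∀ i, HasDerivAt (u · i) (F s i) s)
    (hF : ∀ i, ContinuousOn (F · i) (Icc 0 T))
    (hFle : ∀ s ∈ Icc 0 T, ∀ c, (∀ j, ‖u s j‖ ≤ c) → ∀ i, ‖F s i‖ ≤ M * c)
    (hC : ∀ s ∈ Icc 0 T, ∀ i, ‖u s i‖ ≤ C) :
    ∀ t ∈ Icc 0 T, ∀ i, u t i = 0 := fun t ht i =>
  eq_zero_of_forall_norm_le_pow_div_factorial fun n =>
    norm_le_pow_div_factorial_of_hasDerivAt_of_norm_le hu hu0 hderiv hF hFle hC n t ht i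

end PicardIteration

noncomputable def rieszSqSymbol (β : ℝ) (k : ℤ × ℤ) : ℝ :=
  if k = 0 then 0 else ((k.1 : ℝ)) ^ 2 * (((k.1 : ℝ)) ^ 2 + ((k.2 : ℝ)) ^ 2) ^ ((β - 2) / 2)

theorem one_le_intCast_sq_add_sq {k : ℤ × ℤ} (hk : k ≠ 0) :
    1 ≤ (k.1 : ℝ) ^ 2 + (k.2 : ℝ) ^ 2 := by
  have : k.1 ≠ 0 ∨ k.2 ≠ 0 := by
    by_contra! h
    exact hk (Prod.ext h.1 h.2)
  rcases this with h | h
  · have := (one_le_sq_iff_one_le_abs (k.1 : ℝ)).mpr (by exact_mod_cast Int.one_le_abs h)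
    nlinarith [sq_nonneg (k.2 : ℝ)]
  · have := (one_le_sq_iff_one_le_abs (k.2 : ℝ)).mpr (by exact_mod_cast Int.one_le_abs h)
    nlinarith [sq_nonneg (k.1 : ℝ)]

theorem rieszSqSymbol_nonneg (β : ℝ) (k : ℤ × ℤ) : 0 ≤ rieszSqSymbol β k := by
  unfold rieszSqSymbol
  split_ifs
  · exact le_rfl
  · positivity

theorem rieszSqSymbol_le_sq {β : ℝ} (hβ : β ≤ 2) (k : ℤ × ℤ) :
    rieszSqSymbol β k ≤ (k.1 : ℝ) ^ 2 := by
  unfold rieszSqSymbol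
  split_ifs with hk
  · positivity
  · exact mul_le_of_le_one_right (sq_nonneg _)
      (Real.rpow_le_one_of_one_le_of_nonpos (one_le_intCast_sq_add_sq hk) (by linarith))

theorem norm_neg_half_mul_add_le {x z w : ℂ} {p q K c : ℝ} (hp : 0 ≤ p) (hpK : p ≤ K)
    (hq : 0 ≤ q) (hqK : q ≤ K) (hz : ‖z‖ ≤ c) (hw : ‖w‖ ≤ c) :
    ‖-(x / 2) * ((p : ℂ) * z + (q : ℂ) * w)‖ ≤ ‖x‖ * K * c := by
  have hc : 0 ≤ c := (norm_nonneg z).trans hz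
  have hpz : ‖(p : ℂ) * z‖ ≤ K * c := by
    rw [norm_mul, Complex.norm_real, Real.norm_of_nonneg hp]
    exact mul_le_mul hpK hz (norm_nonneg z) (hp.trans hpK)
  have hqw : ‖(q : ℂ) * w‖ ≤ K * c := by
    rw [norm_mul, Complex.norm_real, Real.norm_of_nonneg hq]
    exact mul_le_mul hqK hw (norm_nonneg w) (hq.trans hqK)
  calc ‖-(x / 2) * ((p : ℂ) * z + (q : ℂ) * w)‖
      ≤ ‖x‖ / 2 * (‖(p : ℂ) * z‖ + ‖(q : ℂ) * w‖) := by
        rw [norm_mul, norm_neg, norm_div, Complex.norm_ofNat]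
        gcongr
        exact norm_add_le _ _
    _ ≤ ‖x‖ / 2 * (K * c + K * c) := by gcongr
    _ = ‖x‖ * K * c := by ring

theorem norm_le_sqrt_of_tsum_sq_le {ι : Type*} {E : Type*} [NormedAddCommGroup E] {f : ι → E}
    {B : ℝ} (hf : Summable fun i => ‖f i‖ ^ 2) (hB : ∑' i, ‖f i‖ ^ 2 ≤ B) (i : ι) :
    ‖f i‖ ≤ Real.sqrt B :=
  Real.le_sqrt_of_sq_le ((hf.le_tsum i fun _ _ => by positivity).trans hB)

theorem stmt12_general (a : ℤ) (β T B : ℝ) (hβ2 : β ≤ 2)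
    (m : ℤ × ℤ → ℝ)
    (hm : m = fun kk =>
      if kk = 0 then 0
      else ((kk.1 : ℝ)) ^ 2 * (((kk.1 : ℝ)) ^ 2 + ((kk.2 : ℝ)) ^ 2) ^ ((β - 2) / 2))
    (ρhat : ℝ → ℤ × ℤ → ℂ)
    (hode : ∀ t ∈ Set.Ioo (0 : ℝ) T, ∀ kk : ℤ × ℤ,
      HasDerivAt (fun s => ρhat s kk)
        (-((a : ℂ) / 2) * ((m (kk.1, kk.2 - a) : ℂ) * ρhat t (kk.1, kk.2 - a)
          + (m (kk.1, kk.2 + a) : ℂ) * ρhat t (kk.1, kk.2 + a))) t)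
    (hsum : ∀ t ∈ Set.Icc (0 : ℝ) T, Summable (fun kk : ℤ × ℤ => ‖ρhat t kk‖ ^ 2))
    (hbdd : ∀ t ∈ Set.Icc (0 : ℝ) T, ∑' kk : ℤ × ℤ, ‖ρhat t kk‖ ^ 2 ≤ B)
    (hcont : ∀ kk : ℤ × ℤ, ContinuousOn (fun t => ρhat t kk) (Set.Icc 0 T))
    (hinit : ∀ kk : ℤ × ℤ, ρhat 0 kk = 0) :
    ∀ t ∈ Set.Ioo (0 : ℝ) T, ∀ kk : ℤ × ℤ, ρhat t kk = 0 := by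
  replace hm : m = rieszSqSymbol β := hm
  subst hm
  rintro t ht ⟨k₁, k₂⟩
  refine eq_zero_of_hasDerivAt_of_norm_le (u := fun s j => ρhat s (k₁, j))
    (M := ‖(a : ℂ)‖ * (k₁ : ℝ) ^ 2) (C := Real.sqrt B)
    (fun j => hcont (k₁, j)) (fun j => hinit (k₁, j)) (fun s hs j => hode s hs (k₁, j))
    (fun j => ?_) ?_ (fun s hs j => norm_le_sqrt_of_tsum_sq_le (hsum s hs) (hbdd s hs) _)
    t (Ioo_subset_Icc_self ht) k₂
  · exact continuousOn_const.mul ((continuousOn_const.mul (hcont _)).add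
      (continuousOn_const.mul (hcont _)))
  · intro s _ c hc j
    exact norm_neg_half_mul_add_le (rieszSqSymbol_nonneg β _) (rieszSqSymbol_le_sq hβ2 _)
      (rieszSqSymbol_nonneg β _) (rieszSqSymbol_le_sq hβ2 _) (hc _) (hc _)

/-- Let `ρ ∈ L^∞(0,T;L²(𝕋²))` solve `∂ₜρ = -a cos(ax₂) R₁²Λ^βρ` with `0 < β ≤ 2` and
`ρ(·,0) = 0`.  Then `ρ(·,t) = 0` for all `t ∈ (0,T)`.  In Fourier variables, with
`m(k) = k₁²|k|^{β-2}` (and `m(0)=0`), the equation reads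
`∂ₜρ̂(k₁,k₂) = -(a/2)[m(k₁,k₂-a)ρ̂(k₁,k₂-a) + m(k₁,k₂+a)ρ̂(k₁,k₂+a)]`, and the
`L^∞(0,T;L²)` assumption is a uniform bound on `Σ_k |ρ̂(k,t)|²`. -/
theorem stmt12 (a : ℤ) (β T B : ℝ) (hβ0 : 0 < β) (hβ2 : β ≤ 2) (hT : 0 < T)
    (m : ℤ × ℤ → ℝ)
    (hm : m = fun kk =>
      if kk = 0 then 0
      else ((kk.1 : ℝ)) ^ 2 * (((kk.1 : ℝ)) ^ 2 + ((kk.2 : ℝ)) ^ 2) ^ ((β - 2) / 2))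
    (ρhat : ℝ → ℤ × ℤ → ℂ)
    (hode : ∀ t ∈ Set.Ioo (0 : ℝ) T, ∀ kk : ℤ × ℤ,
      HasDerivAt (fun s => ρhat s kk)
        (-((a : ℂ) / 2) * ((m (kk.1, kk.2 - a) : ℂ) * ρhat t (kk.1, kk.2 - a)
          + (m (kk.1, kk.2 + a) : ℂ) * ρhat t (kk.1, kk.2 + a))) t)
    (hsum : ∀ t ∈ Set.Icc (0 : ℝ) T, Summable (fun kk : ℤ × ℤ => ‖ρhat t kk‖ ^ 2))
    (hbdd : ∀ t ∈ Set.Icc (0 : ℝ) T, ∑' kk : ℤ × ℤ, ‖ρhat t kk‖ ^ 2 ≤ B)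
    (hcont : ∀ kk : ℤ × ℤ, ContinuousOn (fun t => ρhat t kk) (Set.Icc 0 T))
    (hinit : ∀ kk : ℤ × ℤ, ρhat 0 kk = 0) :
    ∀ t ∈ Set.Ioo (0 : ℝ) T, ∀ kk : ℤ × ℤ, ρhat t kk = 0 :=
  stmt12_general a β T B hβ2 m hm ρhat hode hsum hbdd hcont hinit
end
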